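/- arXiv:1806.00210 — 3 statements merged into one kernel-verified Lean document; each statement's English description precedes it below -/
import Mathlib

section
/- Let T:[r₀,∞)→(0,∞) be a non-decreasing function, c > 0, and C > 1. Suppose the set E₀ = {r : T(r+c) ≥ C·T(r)} has finite linear measure. Then limsup_{r→∞} T(r+c)/T(r−c) ≤ C³. -/
open Filter MeasureTheory Set

lemma key_removal (E : Set ℝ) (hE : volume E < ⊤) (ε : ℝ) (hε : 0 < ε) :
    ∃ R : ℝ, ∀ r ≥ R, ∃ s ∈ Icc r (r + ε), s ∉ E := by
  by_cases h : BddAbove {r : ℝ | Icc r (r + ε) ⊆ E}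
  · obtain ⟨M, hM⟩ := h
    refine ⟨M + 1, fun r hr => ?_⟩
    have hrn : ¬ Icc r (r + ε) ⊆ E := fun hsub => by
      have := hM hsub
      linarith
    rw [Set.not_subset] at hrn
    obtain ⟨s, hs1, hs2⟩ := hrn
    exact ⟨s, hs1, hs2⟩
  · exfalso
    rw [not_bddAbove_iff] at h
    choose g hg1 hg2 using h
    set f : ℕ → ℝ := fun n => Nat.rec (g 0) (fun _ prev => g (prev + ε)) n with hf
    have hfF : ∀ n, Icc (f n) (f n + ε) ⊆ E := by
      intro n
      cases n with
      | zero => exact hg1 0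
      | succ k => exact hg1 _
    have hstep : ∀ n, f n + ε < f (n + 1) := fun n => hg2 (f n + ε)
    have hgap : ∀ m n, m < n → f m + ε < f n := by
      intro m n hmn
      induction n with
      | zero => omega
      | succ k ih =>
        rcases Nat.lt_succ_iff_lt_or_eq.mp hmn with h' | h'
        · have h1 := ih h'
          have h2 := hstep k
          linarith
        · subst h'; exact hstep m
    have hdisj : Pairwise (Function.onFun Disjoint fun n => Icc (f n) (f n + ε)) := by
      intro m n hmn
      simp only [Function.onFun]
      rcases lt_or_gt_of_ne hmn with h' | h'
      · have := hgap m n h'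
        rw [Set.disjoint_left]
        intro x hx hx'
        simp only [Set.mem_Icc] at hx hx'
        linarith [hx.2, hx'.1]
      · have := hgap n m h'
        rw [Set.disjoint_right]
        intro x hx hx'
        simp only [Set.mem_Icc] at hx hx'
        linarith [hx.2, hx'.1]
    have hmeas : volume (⋃ n, Icc (f n) (f n + ε))
        = ∑' n : ℕ, volume (Icc (f n) (f n + ε)) :=
      measure_iUnion hdisj fun n => measurableSet_Icc
    have hvol : ∀ n : ℕ, volume (Icc (f n) (f n + ε)) = ENNReal.ofReal ε := by
      intro n; rw [Real.volume_Icc]; ring_nf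
    have htop : volume (⋃ n, Icc (f n) (f n + ε)) = ⊤ := by
      rw [hmeas]
      simp only [hvol]
      exact ENNReal.tsum_const_eq_top_of_ne_zero (by simp [hε, hε.le, hε.ne'])
    have hsub : (⋃ n, Icc (f n) (f n + ε)) ⊆ E := Set.iUnion_subset hfF
    have := measure_mono (μ := volume) hsub
    rw [htop] at this
    exact (lt_irrefl ⊤ (lt_of_le_of_lt this hE))

theorem stmt8 (r₀ : ℝ) (T : ℝ → ℝ) (hTpos : ∀ r ≥ r₀, 0 < T r)
    (hTmono : MonotoneOn T (Ici r₀)) (c : ℝ) (hc : 0 < c) (C : ℝ) (hC : 1 < C)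
    (hE : volume {r : ℝ | r₀ ≤ r ∧ C * T r ≤ T (r + c)} < ⊤) :
    limsup (fun r : ℝ => ((T (r + c) / T (r - c) : ℝ) : EReal)) atTop
      ≤ ((C ^ 3 : ℝ) : EReal) := by
  set E : Set ℝ := {r : ℝ | r₀ ≤ r ∧ C * T r ≤ T (r + c)} with hEdef
  obtain ⟨R, hR⟩ := key_removal E hE (c / 3) (by linarith)
  refine limsup_le_of_le (by isBoundedDefault) ?_
  filter_upwards [eventually_ge_atTop (max (R + 2 * c) (r₀ + 2 * c))] with r hr
  have hr1 : R + 2 * c ≤ r := le_trans (le_max_left _ _) hr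
  have hr2 : r₀ + 2 * c ≤ r := le_trans (le_max_right _ _) hr
  have hCpos : 0 < C := lt_trans one_pos hC
  -- given an s ∉ E with r₀ ≤ s, get strict inequality
  have hnotE : ∀ s : ℝ, s ∉ E → r₀ ≤ s → T (s + c) < C * T s := by
    intro s hs hs₀
    by_contra hcon
    push_neg at hcon
    exact hs ⟨hs₀, hcon⟩
  have mem_Ici : ∀ x : ℝ, r₀ ≤ x → x ∈ Ici r₀ := fun x hx => hx
  -- step 1
  obtain ⟨s₁, hs₁m, hs₁E⟩ := hR r (by linarith)
  obtain ⟨hs₁l, hs₁u⟩ := hs₁m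
  have hs₁r₀ : r₀ ≤ s₁ := by linarith
  have step1 : T (r + c) ≤ C * T (r + c / 3) := by
    have a : T (r + c) ≤ T (s₁ + c) :=
      hTmono (mem_Ici _ (by linarith)) (mem_Ici _ (by linarith)) (by linarith)
    have b : T (s₁ + c) < C * T s₁ := hnotE s₁ hs₁E hs₁r₀
    have d : T s₁ ≤ T (r + c / 3) :=
      hTmono (mem_Ici _ (by linarith)) (mem_Ici _ (by linarith)) (by linarith)
    nlinarith
  -- step 2 at a₂ = r + c/3 - c
  obtain ⟨s₂, hs₂m, hs₂E⟩ := hR (r + c / 3 - c) (by linarith)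
  obtain ⟨hs₂l, hs₂u⟩ := hs₂m
  have hs₂r₀ : r₀ ≤ s₂ := by linarith
  have step2 : T (r + c / 3) ≤ C * T (r - c / 3) := by
    have a : T (r + c / 3) ≤ T (s₂ + c) :=
      hTmono (mem_Ici _ (by linarith)) (mem_Ici _ (by linarith)) (by linarith)
    have b : T (s₂ + c) < C * T s₂ := hnotE s₂ hs₂E hs₂r₀
    have d : T s₂ ≤ T (r - c / 3) :=
      hTmono (mem_Ici _ (by linarith)) (mem_Ici _ (by linarith)) (by linarith)
    nlinarith
  -- step 3 at a₃ = r - c/3 - c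
  obtain ⟨s₃, hs₃m, hs₃E⟩ := hR (r - c / 3 - c) (by linarith)
  obtain ⟨hs₃l, hs₃u⟩ := hs₃m
  have hs₃r₀ : r₀ ≤ s₃ := by linarith
  have step3 : T (r - c / 3) ≤ C * T (r - c) := by
    have a : T (r - c / 3) ≤ T (s₃ + c) :=
      hTmono (mem_Ici _ (by linarith)) (mem_Ici _ (by linarith)) (by linarith)
    have b : T (s₃ + c) < C * T s₃ := hnotE s₃ hs₃E hs₃r₀
    have d : T s₃ ≤ T (r - c) :=
      hTmono (mem_Ici _ (by linarith)) (mem_Ici _ (by linarith)) (by linarith)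
    nlinarith
  have hTrm : 0 < T (r - c) := hTpos _ (by linarith)
  have chain : T (r + c) ≤ C ^ 3 * T (r - c) := by
    have h2 : C * T (r + c / 3) ≤ C * (C * T (r - c / 3)) :=
      mul_le_mul_of_nonneg_left step2 hCpos.le
    have h3 : C * (C * T (r - c / 3)) ≤ C * (C * (C * T (r - c))) :=
      mul_le_mul_of_nonneg_left (mul_le_mul_of_nonneg_left step3 hCpos.le) hCpos.le
    have hring : C ^ 3 * T (r - c) = C * (C * (C * T (r - c))) := by ring
    linarith
  rw [EReal.coe_le_coe_iff]
  rw [div_le_iff₀ hTrm]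
  linarith [chain]
end

section
/- Let μ be a positive, strictly increasing, differentiable function on (r₀,∞), and let g₁, g₂ be non-decreasing functions on (r₀,∞) with g₁(r) ≤ g₂(r) for all r ∈ (r₀,∞) outside an exceptional set E₁ with ∫_{E₁∩[r₀,∞)} dμ(t) < ∞. Then for any ε>0 there exists r̂ ≥ r₀ such that g₁(r) ≤ g₂(s(r)) for all r ≥ r̂, where s(r) = μ⁻¹(μ(r)+ε). -/
open Filter MeasureTheory Set Topology

lemma aux_deriv_nonneg {r₀ : ℝ} {μ : ℝ → ℝ} (hmono : MonotoneOn μ (Ioi r₀)) {x : ℝ}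
    (hx : r₀ < x) (hd : DifferentiableAt ℝ μ x) : 0 ≤ deriv μ x := by
  have h := hd.hasDerivAt
  rw [hasDerivAt_iff_tendsto_slope] at h
  have h2 : Tendsto (slope μ x) (𝓝[>] x) (𝓝 (deriv μ x)) :=
    h.mono_left (nhdsWithin_mono x (fun y (hy : x < y) => ne_of_gt hy))
  refine ge_of_tendsto h2 ?_
  filter_upwards [self_mem_nhdsWithin] with y hy
  have hxy : x < y := hy
  rw [slope_def_field]
  exact div_nonneg (sub_nonneg.2 (hmono hx (hx.trans hxy) hxy.le)) (sub_nonneg.2 hxy.le)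

theorem stmt9 (r₀ : ℝ) (μ g₁ g₂ : ℝ → ℝ)
    (hμpos : ∀ r ∈ Ioi r₀, 0 < μ r) (hμmono : StrictMonoOn μ (Ioi r₀))
    (hμdiff : DifferentiableOn ℝ μ (Ioi r₀))
    (hg₁ : MonotoneOn g₁ (Ioi r₀)) (hg₂ : MonotoneOn g₂ (Ioi r₀))
    (E₁ : Set ℝ) (hle : ∀ r ∈ Ioi r₀ \ E₁, g₁ r ≤ g₂ r)
    (hE : ∫⁻ t in E₁ ∩ Ici r₀, ENNReal.ofReal (deriv μ t) < ⊤) :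
    ∀ ε > (0:ℝ), ∃ rhat ≥ r₀, ∀ r ≥ rhat, ∀ s ∈ Ioi r₀, μ s = μ r + ε → g₁ r ≤ g₂ s := by
  intro ε hε
  set f : ℝ → ENNReal := fun t => ENNReal.ofReal (deriv μ t) with hf
  set ν : Measure ℝ := volume.withDensity f with hν
  have hνapp : ∀ S : Set ℝ, ν S = ∫⁻ t in S, f t := fun S => withDensity_apply' f S
  set ν' : Measure ℝ := ν.restrict (E₁ ∩ Ici r₀) with hν'
  have hν'fin : ν' univ ≠ ⊤ := by
    rw [Measure.restrict_apply_univ, hνapp]; exact hE.ne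
  -- the tail measures tend to 0
  have htend : Tendsto (fun n : ℕ => ν' (Ici (n : ℝ))) atTop (𝓝 (ν' (⋂ n : ℕ, Ici (n : ℝ)))) :=
    tendsto_measure_iInter_atTop (fun n => (measurableSet_Ici).nullMeasurableSet)
      (fun a b hab => Ici_subset_Ici.2 (by exact_mod_cast hab))
      ⟨0, ne_top_of_le_ne_top hν'fin (measure_mono (subset_univ _))⟩
  have hempty : (⋂ n : ℕ, Ici ((n : ℝ))) = ∅ := by
    ext x
    simp only [mem_iInter, mem_Ici, mem_empty_iff_false, iff_false, not_forall, not_le]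
    obtain ⟨n, hn⟩ := exists_nat_gt x
    exact ⟨n, hn⟩
  rw [hempty, measure_empty] at htend
  have hεpos : (0 : ENNReal) < ENNReal.ofReal ε := ENNReal.ofReal_pos.2 hε
  obtain ⟨n, hn⟩ := (htend.eventually_lt_const hεpos).exists
  refine ⟨max (r₀ + 1) n, le_trans (by linarith) (le_max_left _ _), ?_⟩
  intro r hr s hs hμs
  have hr₀r : r₀ < r := lt_of_lt_of_le (by linarith) (le_trans (le_max_left _ _) hr)
  have hrs : r < s := by
    by_contra hcon
    push_neg at hcon
    have := hμmono.monotoneOn hs hr₀r hcon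
    linarith
  by_cases hex : ∃ t ∈ Icc r s, t ∉ E₁
  · obtain ⟨t, ht, htE⟩ := hex
    have ht₀ : t ∈ Ioi r₀ := lt_of_lt_of_le hr₀r ht.1
    calc g₁ r ≤ g₁ t := hg₁ hr₀r ht₀ ht.1
      _ ≤ g₂ t := hle t ⟨ht₀, htE⟩
      _ ≤ g₂ s := hg₂ ht₀ hs ht.2
  · exfalso
    push_neg at hex
    -- Icc r s ⊆ E₁, derive contradiction with the integral bound
    have hsub : Icc r s ⊆ Ioi r₀ := fun x hx => lt_of_lt_of_le hr₀r hx.1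
    have hderivAt : ∀ x ∈ Icc r s, HasDerivAt μ (deriv μ x) x := fun x hx =>
      (hμdiff.differentiableAt (isOpen_Ioi.mem_nhds (hsub hx))).hasDerivAt
    have hpos : ∀ x ∈ Icc r s, 0 ≤ deriv μ x := fun x hx =>
      aux_deriv_nonneg hμmono.monotoneOn (hsub hx)
        (hμdiff.differentiableAt (isOpen_Ioi.mem_nhds (hsub hx)))
    have hcont : ContinuousOn μ (Icc r s) := (hμdiff.continuousOn).mono hsub
    have hint : IntegrableOn (deriv μ) (Ioc r s) :=
      intervalIntegral.integrableOn_deriv_of_nonneg hcont (fun x hx => hderivAt x ⟨hx.1.le, hx.2.le⟩)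
        (fun x hx => hpos x ⟨hx.1.le, hx.2.le⟩)
    have hIvInt : IntervalIntegrable (deriv μ) volume r s := by
      rw [intervalIntegrable_iff_integrableOn_Ioc_of_le hrs.le]; exact hint
    have hFTC : ∫ x in r..s, deriv μ x = μ s - μ r :=
      intervalIntegral.integral_eq_sub_of_hasDerivAt
        (fun x hx => hderivAt x (by rwa [uIcc_of_le hrs.le] at hx)) hIvInt
    have hsetint : ∫ x in Ioc r s, deriv μ x = ε := by
      rw [← intervalIntegral.integral_of_le hrs.le, hFTC, hμs]; ring
    have hlin : ∫⁻ x in Ioc r s, f x = ENNReal.ofReal ε := by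
      rw [hf, ← ofReal_integral_eq_lintegral_ofReal hint
        ((ae_restrict_iff' measurableSet_Ioc).2 (ae_of_all _
          (fun x hx => hpos x ⟨hx.1.le, hx.2⟩))), hsetint]
    have hsubE : Ioc r s ⊆ Ici (n : ℝ) ∩ (E₁ ∩ Ici r₀) := by
      intro x hx
      have hxr : r ≤ x := hx.1.le
      refine ⟨le_trans (le_trans (le_max_right _ _) hr) hxr, hex x ⟨hxr, hx.2⟩, ?_⟩
      exact le_trans (le_trans (le_trans (by linarith) (le_max_left _ _)) hr) hxr
    have hle1 : ENNReal.ofReal ε ≤ ν' (Ici (n : ℝ)) := by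
      rw [hν', Measure.restrict_apply measurableSet_Ici, hνapp]
      calc ENNReal.ofReal ε = ∫⁻ x in Ioc r s, f x := hlin.symm
        _ ≤ ∫⁻ x in Ici (n : ℝ) ∩ (E₁ ∩ Ici r₀), f x := lintegral_mono_set hsubE
    exact absurd (lt_of_le_of_lt hle1 hn) (lt_irrefl _)
end

section
/- Let h:[r₀,∞)→(0,∞) be increasing with ∫_{r₀}^∞ dt/(t·h(t)) < ∞, and let s ≥ 1. Let (r_n)_{n≥0} be a sequence with r_{n+1} − r_n ≥ s for all n, and suppose there is m such that r_n ≥ n·h(n) for all n with r_n ≥ m. Then the union ⋃_{n≥0} [r_n, r_n+s] has finite logarithmic measure. -/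
/-!
On `[r n, r n + s]` we have `1 / t ≤ 1 / r n`, so the `n`-th interval has logarithmic measure
at most `s / r n`. The gaps force `r n → ∞`, so eventually `r n ≥ m` and then
`s / r n ≤ s / (n h n)`; and `∑ 1 / (n h n)` converges by the integral test against
`∫ dt / (t h t)`.
-/

open Filter MeasureTheory Set

lemma setLIntegral_inv_Icc_inter_Ici_one_le (a s : ℝ) :
    ∫⁻ t in Icc a (a + s) ∩ Ici 1, ENNReal.ofReal t⁻¹ ≤
      ENNReal.ofReal (max a 1)⁻¹ * ENNReal.ofReal s := by
  calc ∫⁻ t in Icc a (a + s) ∩ Ici 1, ENNReal.ofReal t⁻¹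
      ≤ ∫⁻ _ in Icc a (a + s) ∩ Ici 1, ENNReal.ofReal (max a 1)⁻¹ :=
        setLIntegral_mono measurable_const fun t ht =>
          ENNReal.ofReal_le_ofReal <| inv_anti₀ (by positivity) (max_le ht.1.1 ht.2)
    _ = ENNReal.ofReal (max a 1)⁻¹ * volume (Icc a (a + s) ∩ Ici 1) := setLIntegral_const _ _
    _ ≤ ENNReal.ofReal (max a 1)⁻¹ * ENNReal.ofReal s := by
        gcongr
        calc volume (Icc a (a + s) ∩ Ici 1) ≤ volume (Icc a (a + s)) :=
              measure_mono inter_subset_left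
          _ = ENNReal.ofReal s := by rw [Real.volume_Icc, add_sub_cancel_left]

lemma lintegral_inv_iUnion_Icc_inter_Ici_one_lt_top (r : ℕ → ℝ) (s : ℝ)
    (hr : Summable fun n => (max (r n) 1)⁻¹) :
    ∫⁻ t in (⋃ n, Icc (r n) (r n + s)) ∩ Ici 1, ENNReal.ofReal t⁻¹ < ⊤ :=
  calc ∫⁻ t in (⋃ n, Icc (r n) (r n + s)) ∩ Ici 1, ENNReal.ofReal t⁻¹
      ≤ ∑' n, ∫⁻ t in Icc (r n) (r n + s) ∩ Ici 1, ENNReal.ofReal t⁻¹ := by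
        rw [iUnion_inter]
        exact lintegral_iUnion_le _ _
    _ ≤ ∑' n, ENNReal.ofReal (max (r n) 1)⁻¹ * ENNReal.ofReal s :=
        ENNReal.tsum_le_tsum fun n => setLIntegral_inv_Icc_inter_Ici_one_le (r n) s
    _ = ENNReal.ofReal (∑' n, (max (r n) 1)⁻¹) * ENNReal.ofReal s := by
        rw [ENNReal.tsum_mul_right, ENNReal.ofReal_tsum_of_nonneg (fun n => by positivity) hr]
    _ < ⊤ := ENNReal.mul_lt_top ENNReal.ofReal_lt_top ENNReal.ofReal_lt_top

lemma summable_inv_natCast_mul_of_integrableOn {r₀ : ℝ} {h : ℝ → ℝ}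
    (hpos : ∀ x ≥ r₀, 0 < h x) (hmono : MonotoneOn h (Ici r₀))
    (hint : IntegrableOn (fun t => (t * h t)⁻¹) (Ici r₀)) :
    Summable fun n : ℕ => ((n : ℝ) * h n)⁻¹ := by
  obtain ⟨N, hN⟩ := exists_nat_ge (max r₀ 1)
  have hN₀ : r₀ ≤ N := le_of_max_le_left hN
  have hN₁ : (1 : ℝ) ≤ N := le_of_max_le_right hN
  have hprod_pos : ∀ t ∈ Ici (N : ℝ), 0 < t * h t := fun t ht =>
    mul_pos (by linarith [mem_Ici.1 ht]) (hpos t (hN₀.trans ht))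
  refine AntitoneOn.summable_of_integrableOn_Ioi (N := N) ?_
    (hint.mono_set fun t ht => hN₀.trans (le_of_lt ht))
    fun t ht => inv_nonneg.2 (hprod_pos t (mem_Ici.2 (le_of_lt ht))).le
  intro a ha b hb hab
  exact inv_anti₀ (hprod_pos a ha) <| mul_le_mul hab
    (hmono (hN₀.trans ha) (hN₀.trans hb) hab) (hpos a (hN₀.trans ha)).le
    (by linarith [mem_Ici.1 ha])

lemma tendsto_atTop_of_le_sub_succ {r : ℕ → ℝ} {s : ℝ} (hs : 0 < s)
    (hgap : ∀ n, s ≤ r (n + 1) - r n) : Tendsto r atTop atTop := by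
  have hlin : ∀ n : ℕ, r 0 + n * s ≤ r n := by
    intro n
    induction n with
    | zero => simp
    | succ k ih => push_cast; linarith [hgap k]
  exact tendsto_atTop_mono hlin <| tendsto_atTop_add_const_left _ _ <|
    tendsto_natCast_atTop_atTop.atTop_mul_const hs

theorem stmt12 (r₀ : ℝ) (h : ℝ → ℝ) (hpos : ∀ x ≥ r₀, 0 < h x)
    (hmono : StrictMonoOn h (Ici r₀))
    (hint : IntegrableOn (fun t => (t * h t)⁻¹) (Ici r₀))
    (s : ℝ) (hs : 1 ≤ s) (r : ℕ → ℝ) (hgap : ∀ n, s ≤ r (n + 1) - r n)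
    (m : ℝ) (hm : ∀ n : ℕ, m ≤ r n → (n : ℝ) * h n ≤ r n) :
    ∫⁻ t in (⋃ n : ℕ, Icc (r n) (r n + s)) ∩ Ici (1:ℝ),
      ENNReal.ofReal t⁻¹ < ⊤ := by
  have hsum := summable_inv_natCast_mul_of_integrableOn hpos hmono.monotoneOn hint
  refine lintegral_inv_iUnion_Icc_inter_Ici_one_lt_top r s (hsum.of_norm_bounded_eventually_nat ?_)
  have hr := tendsto_atTop_of_le_sub_succ (by linarith) hgap
  filter_upwards [hr.eventually_ge_atTop (max m 1),
    tendsto_natCast_atTop_atTop.eventually_ge_atTop (max r₀ 1)] with n hrn hn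
  have hnh_pos : 0 < (n : ℝ) * h n :=
    mul_pos (by linarith [le_max_right r₀ 1]) (hpos n (le_of_max_le_left hn))
  rw [Real.norm_of_nonneg (by positivity), max_eq_left (le_of_max_le_right hrn)]
  exact inv_anti₀ hnh_pos (hm n (le_of_max_le_left hrn))
end
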